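/- For a system of p qubits (all nᵢ = 2): if k·(1 + 3p) < 2^{2p}, then Σ^k(2,…,2) has (4^p − 1)-dimensional Hausdorff measure zero in the space of I×I complex matrices, I = Fin p → Fin 2. -/

import Mathlib

open scoped ComplexOrder ENNReal NNReal
open MeasureTheory

/-- A density matrix: positive semidefinite (hence Hermitian) with trace 1. -/
def IsDensityMatrix {m : Type*} [Fintype m] [DecidableEq m] (A : Matrix m m ℂ) : Prop :=
  A.PosSemidef ∧ A.trace = 1

/-- A pure density matrix: a density matrix of rank one. -/
def IsPureDensityMatrix {m : Type*} [Fintype m] [DecidableEq m] (A : Matrix m m ℂ) : Prop :=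
  IsDensityMatrix A ∧ A.rank = 1

/-- Tensor (Kronecker) product of the matrices `B i` over all `p` particles. -/
def prodMat {p : ℕ} (n : Fin p → ℕ) (B : ∀ i, Matrix (Fin (n i)) (Fin (n i)) ℂ) :
    Matrix (∀ i, Fin (n i)) (∀ i, Fin (n i)) ℂ :=
  fun x y => ∏ i, B i (x i) (y i)

/-- `Σ^k(n₁,…,n_p)`: separable states of ensemble length at most `k`. -/
def SigmaK {p : ℕ} (n : Fin p → ℕ) (k : ℕ) :
    Set (Matrix (∀ i, Fin (n i)) (∀ i, Fin (n i)) ℂ) :=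
  {A | ∃ (l : Fin k → ℝ) (B : Fin k → ∀ i, Matrix (Fin (n i)) (Fin (n i)) ℂ),
    (∀ j, 0 ≤ l j) ∧ (∑ j, l j) = 1 ∧ (∀ j i, IsDensityMatrix (B j i)) ∧
    A = ∑ j, l j • prodMat n (B j)}

/-- `Σ_pure^k(n₁,…,n_p)`: separable states of pure-state ensemble length at most `k`. -/
def SigmaPureK {p : ℕ} (n : Fin p → ℕ) (k : ℕ) :
    Set (Matrix (∀ i, Fin (n i)) (∀ i, Fin (n i)) ℂ) :=
  {A | ∃ (l : Fin k → ℝ) (B : Fin k → ∀ i, Matrix (Fin (n i)) (Fin (n i)) ℂ),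
    (∀ j, 0 ≤ l j) ∧ (∑ j, l j) = 1 ∧ (∀ j i, IsPureDensityMatrix (B j i)) ∧
    A = ∑ j, l j • prodMat n (B j)}

noncomputable instance {m : Type*} [Fintype m] : NormedAddCommGroup (Matrix m m ℂ) :=
  Matrix.normedAddCommGroup

noncomputable instance {m : Type*} [Fintype m] : MeasurableSpace (Matrix m m ℂ) := borel _

instance {m : Type*} [Fintype m] :
    @BorelSpace (Matrix m m ℂ) PseudoMetricSpace.toUniformSpace.toTopologicalSpace _ := ⟨rfl⟩

noncomputable instance {m : Type*} [Fintype m] : NormedSpace ℝ (Matrix m m ℂ) :=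
  Matrix.normedSpace

@[fun_prop] theorem contDiff_ofReal_aux : ContDiff ℝ 1 Complex.ofReal :=
  Complex.ofRealCLM.contDiff

private lemma contDiff_matrix_aux {E : Type*} [NormedAddCommGroup E] [NormedSpace ℝ E]
    {ι : Type*} [Fintype ι] {f : E → Matrix ι ι ℂ}
    (h : ∀ x y, ContDiff ℝ 1 (fun e => f e x y)) : ContDiff ℝ 1 f :=
  contDiff_pi.mpr fun x => contDiff_pi.mpr fun y => h x y

private lemma contDiff_finset_prod_aux {E : Type*} [NormedAddCommGroup E] [NormedSpace ℝ E]
    {ι : Type*} {s : Finset ι} {f : ι → E → ℂ} (h : ∀ i ∈ s, ContDiff ℝ 1 (f i)) :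
    ContDiff ℝ 1 (fun e => ∏ i ∈ s, f i e) := by
  classical
  induction s using Finset.induction_on with
  | empty => simpa using contDiff_const
  | @insert a s hx ih =>
    simp only [Finset.prod_insert hx]
    exact (h _ (Finset.mem_insert_self _ _)).mul
      (ih fun i hi => h i (Finset.mem_insert_of_mem hi))

/-- Parametrization of 2×2 Hermitian trace-one matrices by three reals. -/
noncomputable def qMatAux (t : ℝ × ℝ × ℝ) : Matrix (Fin 2) (Fin 2) ℂ :=
  fun x y =>
    if x = 0 then (if y = 0 then (t.1 : ℂ) else (t.2.1 : ℂ) + (t.2.2 : ℂ) * Complex.I)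
    else (if y = 0 then (t.2.1 : ℂ) - (t.2.2 : ℂ) * Complex.I else 1 - (t.1 : ℂ))

def coeffAux (m : ℕ) (l : Fin m → ℝ) (j : Fin (m + 1)) : ℝ :=
  if h : (j : ℕ) < m then l ⟨j, h⟩ else 1 - ∑ i, l i

/-- Smooth parametrization whose range contains `SigmaK (fun _ => 2) (m+1)`. -/
noncomputable def paramMapAux (p m : ℕ)
    (q : (Fin m → ℝ) × (Fin (m + 1) → Fin p → ℝ × ℝ × ℝ)) :
    Matrix (Fin p → Fin 2) (Fin p → Fin 2) ℂ :=
  ∑ j, coeffAux m q.1 j • prodMat (fun _ => 2) (fun i => qMatAux (q.2 j i))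

lemma sigmaK_subset_range_paramMapAux (p m : ℕ) :
    SigmaK (fun _ : Fin p => 2) (m + 1) ⊆ Set.range (paramMapAux p m) := by
  rintro A ⟨l, B, hl0, hl1, hB, rfl⟩
  refine ⟨(fun i => l i.castSucc, fun j i => ((B j i 0 0).re, (B j i 0 1).re, (B j i 0 1).im)), ?_⟩
  unfold paramMapAux
  refine Finset.sum_congr rfl fun j _ => ?_
  have hcoeff : coeffAux m (fun i => l i.castSucc) j = l j := by
    unfold coeffAux
    split
    · next h =>
      have : Fin.castSucc (⟨(j : ℕ), h⟩ : Fin m) = j := Fin.ext rfl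
      simpa [this]
    · next h =>
      have hj : j = Fin.last m := Fin.ext (Nat.le_antisymm (Nat.lt_succ_iff.mp j.isLt) (not_lt.mp h))
      rw [Fin.sum_univ_castSucc] at hl1
      rw [hj]
      linarith
  have hmat : (fun i => qMatAux ((B j i 0 0).re, (B j i 0 1).re, (B j i 0 1).im)) = B j := by
    funext i
    have hherm : (B j i).IsHermitian := (hB j i).1.isHermitian
    have h00 : ((B j i 0 0).re : ℂ) = B j i 0 0 := by
      have him : (B j i 0 0).im = 0 := by
        have := hherm.apply 0 0
        have := congrArg Complex.im this
        simp at this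
        linarith
      exact Complex.ext (by simp) (by simp [him])
    have h10 := hherm.apply 1 0
    have h11 : B j i 1 1 = 1 - B j i 0 0 := by
      have htr := (hB j i).2
      rw [Matrix.trace, Fin.sum_univ_two] at htr
      simp only [Matrix.diag_apply] at htr
      linear_combination htr
    funext x y
    fin_cases x <;> fin_cases y <;>
      simp [qMatAux, h00, ← h10, h11, Complex.ext_iff]
  rw [hcoeff, hmat]

lemma paramMapAux_contDiff (p m : ℕ) : ContDiff ℝ 1 (paramMapAux p m) := by
  apply contDiff_matrix_aux
  intro x y
  have hrw : (fun e => paramMapAux p m e x y) =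
      fun e : (Fin m → ℝ) × (Fin (m + 1) → Fin p → ℝ × ℝ × ℝ) =>
        ∑ j, coeffAux m e.1 j • (∏ i, qMatAux (e.2 j i) (x i) (y i)) := by
    funext e
    simp [paramMapAux, Matrix.sum_apply, Matrix.smul_apply, prodMat]
  rw [hrw]
  refine ContDiff.sum fun j _ => ContDiff.smul (f := fun (e : (Fin m → ℝ) × (Fin (m + 1) → Fin p → ℝ × ℝ × ℝ)) => coeffAux m e.1 j)
    (g := fun (e : (Fin m → ℝ) × (Fin (m + 1) → Fin p → ℝ × ℝ × ℝ)) => ∏ i, qMatAux (e.2 j i) (x i) (y i)) ?_ ?_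
  · unfold coeffAux
    by_cases h : (j : ℕ) < m
    · simp only [dif_pos h]; fun_prop
    · simp only [dif_neg h]
      exact contDiff_const.sub (ContDiff.sum fun i _ => by fun_prop)
  · refine contDiff_finset_prod_aux fun i _ => ?_
    have : ∀ a b : Fin 2, ContDiff ℝ 1
        (fun e : (Fin m → ℝ) × (Fin (m + 1) → Fin p → ℝ × ℝ × ℝ) => qMatAux (e.2 j i) a b) := by
      intro a b
      fin_cases a <;> fin_cases b <;> simp only [qMatAux] <;> norm_num <;> fun_prop
    exact this (x i) (y i)

/-- for `p` qubits, if `k·(1 + 3p) < 2^(2p)` then `Σ^k(2,…,2)` has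
`(4^p - 1)`-dimensional Hausdorff measure zero. -/
theorem sigmaK_qubits_measure_zero (p k : ℕ) (hk : k * (1 + 3 * p) < 2 ^ (2 * p)) :
    μH[(4 : ℝ) ^ p - 1] (SigmaK (fun _ : Fin p => 2) k) = 0 := by
  obtain _ | m := k
  · have hempty : SigmaK (fun _ : Fin p => 2) 0 = ∅ := by
      ext A
      simp only [SigmaK, Set.mem_setOf_eq, Set.mem_empty_iff_false, iff_false]
      rintro ⟨l, B, -, h1, -⟩
      simp at h1
    rw [hempty]
    exact measure_empty
  · have h2 : (2 : ℕ) ^ (2 * p) = 4 ^ p := by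
      rw [two_mul, pow_add, ← mul_pow]; norm_num
    rw [h2] at hk
    have h4 : 2 ≤ 4 ^ p := by
      have h1 : 1 ≤ (m + 1) * (1 + 3 * p) := Nat.mul_pos (by omega) (by omega)
      omega
    have hfr : Module.finrank ℝ ((Fin m → ℝ) × (Fin (m + 1) → Fin p → ℝ × ℝ × ℝ))
        = m + (m + 1) * (p * 3) := by
      simp [Module.finrank_prod, Module.finrank_pi, Module.finrank_pi_fintype,
        Finset.sum_const, Fintype.card_fin, smul_eq_mul, Module.finrank_self]
    have hdim : dimH (SigmaK (fun _ : Fin p => 2) (m + 1)) ≤ (Module.finrank ℝ ((Fin m → ℝ) × (Fin (m + 1) → Fin p → ℝ × ℝ × ℝ)) : ℝ≥0∞) :=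
      (dimH_mono (sigmaK_subset_range_paramMapAux p m)).trans
        (paramMapAux_contDiff p m).dimH_range_le
    have hlt : Module.finrank ℝ ((Fin m → ℝ) × (Fin (m + 1) → Fin p → ℝ × ℝ × ℝ)) < 4 ^ p - 1 := by
      rw [hfr]
      have : (m + 1) * (1 + 3 * p) = m + 1 + (m + 1) * (p * 3) := by ring
      omega
    have key : dimH (SigmaK (fun _ : Fin p => 2) (m + 1)) <
        (((4 ^ p - 1 : ℕ) : ℝ≥0) : ℝ≥0∞) := by
      refine hdim.trans_lt ?_
      rw [show (((4 ^ p - 1 : ℕ) : ℝ≥0) : ℝ≥0∞) = ((4 ^ p - 1 : ℕ) : ℝ≥0∞) by simp]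
      exact_mod_cast hlt
    have hgoal : (4 : ℝ) ^ p - 1 = (((4 ^ p - 1 : ℕ) : ℝ≥0) : ℝ) := by
      rw [NNReal.coe_natCast, Nat.cast_sub (by omega : 1 ≤ 4 ^ p)]
      push_cast
      ring
    rw [hgoal]
    exact hausdorffMeasure_of_dimH_lt key
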